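/- There exists a constant c₂ > 0 (one may take c₂ = 4π) such that for all positive integers d, m with n = m^d, all ω ∈ ℝ^d, all M ≥ 1, all L ≥ 1, and every function v : [0,1]^d → ℝ that is L-Lipschitz with respect to the Euclidean norm and satisfies |v(x)| ≤ M for all x, the discretization error of the corner-grid rule satisfies |∫_{[0,1]^d} v(x)·e^{2πi⟨ω,x⟩} dx − m^{-d} · Σ_{i ∈ {0,...,m−1}^d} v(i/m)·e^{2πi⟨ω, i/m⟩}| ≤ c₂ · √d · (‖ω‖ + L) · M · n^{−1/d}. -/

import Mathlib

/-!
Split the unit cube into the `m ^ d` half-open cells `∏ₖ [iₖ/m, (iₖ+1)/m)`, each of volume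
`m⁻ᵈ`; the corner rule replaces the integrand on each cell by its value at the corner `i/m`,
from which every point of the cell is at Euclidean distance at most `√d / m`. The integrand
`v x · e^{2πi⟨ω,x⟩}` is `(L + 2π M ‖ω‖)`-Lipschitz, because the phase has modulus one and
`|e^{iα} - e^{iβ}| ≤ |α - β|`, so the error is at most `(L + 2π M ‖ω‖) √d / m`, and
`m = n^{1/d}`.
-/

open MeasureTheory Real Set Filter Topology Function

section EuclideanBounds

variable {ι : Type*} [Fintype ι]

lemma sqrt_sum_sq_le_sqrt_card_mul {t : ι → ℝ} {r : ℝ} (hr : 0 ≤ r) (ht : ∀ k, |t k| ≤ r) :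
    √(∑ k, t k ^ 2) ≤ √(Fintype.card ι) * r := by
  have hsum : ∑ k, t k ^ 2 ≤ Fintype.card ι * r ^ 2 :=
    calc ∑ k, t k ^ 2 ≤ ∑ _k : ι, r ^ 2 :=
          Finset.sum_le_sum fun k _ => sq_le_sq' (abs_le.1 (ht k)).1 (abs_le.1 (ht k)).2
      _ = Fintype.card ι * r ^ 2 := by simp
  calc √(∑ k, t k ^ 2) ≤ √(Fintype.card ι * r ^ 2) := Real.sqrt_le_sqrt hsum
    _ = √(Fintype.card ι) * r := by rw [Real.sqrt_mul (Nat.cast_nonneg _), Real.sqrt_sq hr]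

lemma abs_sum_mul_sub_sum_mul_le (ω x y : ι → ℝ) :
    |∑ k, ω k * x k - ∑ k, ω k * y k| ≤ √(∑ k, ω k ^ 2) * √(∑ k, (x k - y k) ^ 2) := by
  have hxy := Real.sum_mul_le_sqrt_mul_sqrt Finset.univ ω (x - y)
  have hyx := Real.sum_mul_le_sqrt_mul_sqrt Finset.univ ω (y - x)
  simp only [Pi.sub_apply, mul_sub, Finset.sum_sub_distrib] at hxy hyx
  simp only [sub_sq_comm (y _)] at hyx
  exact abs_le.2 ⟨by linarith, hxy⟩

lemma norm_exp_two_pi_I_mul (t : ℝ) : ‖Complex.exp (2 * π * Complex.I * t)‖ = 1 := by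
  simp [Complex.norm_exp]

lemma norm_exp_two_pi_I_mul_sub_le (a b : ℝ) :
    ‖Complex.exp (2 * π * Complex.I * a) - Complex.exp (2 * π * Complex.I * b)‖
      ≤ 2 * π * |a - b| := by
  have hfactor : Complex.exp (2 * π * Complex.I * a) - Complex.exp (2 * π * Complex.I * b)
      = Complex.exp (2 * π * Complex.I * b) *
        (Complex.exp (Complex.I * ↑(2 * π * (a - b))) - 1) := by
    rw [mul_sub, mul_one, ← Complex.exp_add]; push_cast; ring_nf
  rw [hfactor, norm_mul, norm_exp_two_pi_I_mul, one_mul]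
  calc _ ≤ ‖2 * π * (a - b)‖ := norm_exp_I_mul_ofReal_sub_one_le
    _ = 2 * π * |a - b| := by rw [Real.norm_eq_abs, abs_mul, abs_of_pos two_pi_pos]

lemma norm_mul_exp_sub_mul_exp_le {s : Set (ι → ℝ)} {v : (ι → ℝ) → ℝ} {M L : ℝ} (ω : ι → ℝ)
    (hv : ∀ x ∈ s, ∀ y ∈ s, |v x - v y| ≤ L * √(∑ k, (x k - y k) ^ 2))
    (hvM : ∀ x ∈ s, |v x| ≤ M) {x y : ι → ℝ} (hx : x ∈ s) (hy : y ∈ s) :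
    ‖(v x : ℂ) * Complex.exp (2 * π * Complex.I * ((∑ k, ω k * x k : ℝ) : ℂ)) -
        (v y : ℂ) * Complex.exp (2 * π * Complex.I * ((∑ k, ω k * y k : ℝ) : ℂ))‖
      ≤ (L + 2 * π * M * √(∑ k, ω k ^ 2)) * √(∑ k, (x k - y k) ^ 2) := by
  set ex := Complex.exp (2 * π * Complex.I * ((∑ k, ω k * x k : ℝ) : ℂ))
  set ey := Complex.exp (2 * π * Complex.I * ((∑ k, ω k * y k : ℝ) : ℂ))
  have hex : ‖ex‖ = 1 := norm_exp_two_pi_I_mul _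
  have hphase : ‖ex - ey‖ ≤ 2 * π * (√(∑ k, ω k ^ 2) * √(∑ k, (x k - y k) ^ 2)) :=
    (norm_exp_two_pi_I_mul_sub_le _ _).trans <|
      mul_le_mul_of_nonneg_left (abs_sum_mul_sub_sum_mul_le ω x y) two_pi_pos.le
  calc _ = ‖((v x - v y : ℝ) : ℂ) * ex + (v y : ℂ) * (ex - ey)‖ := by push_cast; ring_nf
    _ ≤ |v x - v y| * ‖ex‖ + |v y| * ‖ex - ey‖ := by
        grw [norm_add_le]; simp only [norm_mul, Complex.norm_real, Real.norm_eq_abs, le_refl]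
    _ ≤ L * √(∑ k, (x k - y k) ^ 2) * 1
          + M * (2 * π * (√(∑ k, ω k ^ 2) * √(∑ k, (x k - y k) ^ 2))) := by
        rw [hex]
        gcongr
        exacts [hv x hx y hy, (abs_nonneg _).trans (hvM x hx), hvM y hy]
    _ = _ := by ring

lemma continuousOn_of_norm_sub_le_mul_sqrt {E : Type*} [SeminormedAddCommGroup E]
    {s : Set (ι → ℝ)} {f : (ι → ℝ) → E} {K : ℝ}
    (hf : ∀ x ∈ s, ∀ y ∈ s, ‖f x - f y‖ ≤ K * √(∑ k, (x k - y k) ^ 2)) :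
    ContinuousOn f s := by
  intro x hx
  rw [ContinuousWithinAt, tendsto_iff_norm_sub_tendsto_zero]
  have hbound : Tendsto (fun y => K * √(∑ k, (y k - x k) ^ 2)) (𝓝[s] x) (𝓝 0) := by
    have hcont : Continuous fun y : ι → ℝ => K * √(∑ k, (y k - x k) ^ 2) := by fun_prop
    simpa using (hcont.tendsto x).mono_left nhdsWithin_le_nhds
  exact squeeze_zero' (Eventually.of_forall fun _ => norm_nonneg _)
    (eventually_nhdsWithin_of_forall fun y hy => hf y hy x hx) hbound

end EuclideanBounds

section CornerCells

variable {ι : Type*}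

def cornerCell (m : ℕ) (i : ι → Fin m) : Set (ι → ℝ) :=
  univ.pi fun k => Ico ((i k : ℝ) / m) ((i k + 1 : ℝ) / m)

lemma mem_Ico_div_iff_floor {m : ℕ} (hm : 0 < m) (j : ℕ) {t : ℝ} :
    t ∈ Ico ((j : ℝ) / m) ((j + 1 : ℝ) / m) ↔ 0 ≤ t ∧ ⌊t * m⌋₊ = j := by
  have hmR : (0 : ℝ) < m := Nat.cast_pos.2 hm
  rw [mem_Ico, div_le_iff₀ hmR, lt_div_iff₀ hmR]
  constructor
  · rintro ⟨hjt, htj⟩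
    have ht : 0 ≤ t := nonneg_of_mul_nonneg_left ((Nat.cast_nonneg j).trans hjt) hmR
    exact ⟨ht, (Nat.floor_eq_iff (mul_nonneg ht hmR.le)).2 ⟨hjt, htj⟩⟩
  · rintro ⟨ht, hfloor⟩
    exact (Nat.floor_eq_iff (mul_nonneg ht hmR.le)).1 hfloor

variable {m : ℕ}

lemma pairwise_disjoint_cornerCell (hm : 0 < m) :
    Pairwise (Disjoint on (cornerCell m : (ι → Fin m) → Set (ι → ℝ))) := by
  refine fun i j hij => Set.disjoint_left.2 fun x hxi hxj => hij (funext fun k => Fin.ext ?_)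
  rw [← ((mem_Ico_div_iff_floor hm _).1 (hxi k trivial)).2,
    ((mem_Ico_div_iff_floor hm _).1 (hxj k trivial)).2]

lemma iUnion_cornerCell (hm : 0 < m) :
    ⋃ i, cornerCell m i = univ.pi fun _ : ι => Ico (0 : ℝ) 1 := by
  have hmR : (0 : ℝ) < m := Nat.cast_pos.2 hm
  ext x
  simp only [cornerCell, mem_iUnion, mem_univ_pi, mem_Ico_div_iff_floor hm, mem_Ico]
  constructor
  · rintro ⟨i, hi⟩ k
    refine ⟨(hi k).1, ?_⟩
    have := Nat.lt_floor_add_one (x k * m)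
    rw [(hi k).2] at this
    have : (i k : ℝ) + 1 ≤ m := by exact_mod_cast (i k).isLt
    nlinarith
  · intro hx
    refine ⟨fun k => ⟨⌊x k * m⌋₊, ?_⟩, fun k => ⟨(hx k).1, rfl⟩⟩
    rw [Nat.floor_lt (mul_nonneg (hx k).1 hmR.le)]
    nlinarith [(hx k).2]

lemma cornerCell_subset_cube (hm : 0 < m) (i : ι → Fin m) :
    cornerCell m i ⊆ univ.pi fun _ => Icc (0 : ℝ) 1 :=
  (subset_iUnion _ i).trans <| (iUnion_cornerCell hm).trans_subset <|
    pi_mono fun _ _ => Ico_subset_Icc_self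

lemma iUnion_cornerCell_ae_eq_cube [Fintype ι] (hm : 0 < m) :
    (⋃ i, cornerCell m i : Set (ι → ℝ)) =ᵐ[volume] univ.pi fun _ => Icc (0 : ℝ) 1 := by
  rw [iUnion_cornerCell hm, pi_univ_Icc]
  exact Measure.univ_pi_Ico_ae_eq_Icc

lemma measurableSet_cornerCell [Countable ι] (i : ι → Fin m) : MeasurableSet (cornerCell m i) :=
  MeasurableSet.univ_pi fun _ => measurableSet_Ico

lemma volume_cornerCell [Fintype ι] (i : ι → Fin m) :
    volume (cornerCell m i) = ENNReal.ofReal (((m : ℝ) ^ Fintype.card ι)⁻¹) := by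
  have hside : ∀ k, (i k + 1 : ℝ) / m - (i k : ℝ) / m = (m : ℝ)⁻¹ := fun k => by ring
  simp only [cornerCell, Real.volume_pi_Ico, hside, Finset.prod_const, Finset.card_univ]
  rw [← ENNReal.ofReal_pow (by positivity), inv_pow]

lemma corner_mem_cornerCell (hm : 0 < m) (i : ι → Fin m) :
    (fun k => (i k : ℝ) / m) ∈ cornerCell m i := fun _ _ =>
  ⟨le_rfl, div_lt_div_of_pos_right (lt_add_one _) (Nat.cast_pos.2 hm)⟩

lemma abs_sub_corner_le_of_mem_cornerCell {i : ι → Fin m} {x : ι → ℝ} (hx : x ∈ cornerCell m i)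
    (k : ι) : |x k - (i k : ℝ) / m| ≤ 1 / m := by
  obtain ⟨hlo, hhi⟩ := hx k trivial
  rw [add_div] at hhi
  exact abs_le.2 ⟨by linarith [show (0 : ℝ) ≤ 1 / m by positivity], by linarith⟩

end CornerCells

theorem norm_setIntegral_iUnion_sub_sum_smul_le {α E ι : Type*} [MeasurableSpace α]
    [NormedAddCommGroup E] [NormedSpace ℝ E] [CompleteSpace E] [Fintype ι] {μ : Measure α}
    {B : ι → Set α}
    (hB : ∀ i, MeasurableSet (B i)) (hdisj : Pairwise (Disjoint on B)) (hμB : ∀ i, μ (B i) ≠ ⊤)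
    {f : α → E} (hf : IntegrableOn f (⋃ i, B i) μ) {y : ι → E} {ε : ℝ}
    (hε : ∀ i, ∀ x ∈ B i, ‖f x - y i‖ ≤ ε) :
    ‖∫ x in ⋃ i, B i, f x ∂μ - ∑ i, μ.real (B i) • y i‖ ≤ ε * ∑ i, μ.real (B i) := by
  have hcell : ∀ i, ‖∫ x in B i, f x ∂μ - μ.real (B i) • y i‖ ≤ ε * μ.real (B i) := fun i => by
    rw [← setIntegral_const, ← integral_sub (hf.mono_set (subset_iUnion B i))
      (integrableOn_const (hμB i))]
    exact norm_setIntegral_le_of_norm_le_const (hμB i).lt_top (hε i)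
  rw [integral_iUnion_fintype hB hdisj fun i => hf.mono_set (subset_iUnion B i),
    ← Finset.sum_sub_distrib, Finset.mul_sum]
  exact (norm_sum_le _ _).trans (Finset.sum_le_sum fun i _ => hcell i)

theorem norm_setIntegral_cube_sub_cornerGrid_le {ι E : Type*} [Fintype ι] [DecidableEq ι]
    [NormedAddCommGroup E] [NormedSpace ℝ E] [CompleteSpace E] {m : ℕ} (hm : 0 < m)
    {f : (ι → ℝ) → E} {K : ℝ} (hK : 0 ≤ K)
    (hf : ∀ x ∈ univ.pi (fun _ => Icc (0 : ℝ) 1), ∀ y ∈ univ.pi (fun _ => Icc (0 : ℝ) 1),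
      ‖f x - f y‖ ≤ K * √(∑ k, (x k - y k) ^ 2)) :
    ‖(∫ x in univ.pi (fun _ => Icc (0 : ℝ) 1), f x) -
        ((m : ℝ) ^ Fintype.card ι)⁻¹ • ∑ i : ι → Fin m, f (fun k => (i k : ℝ) / m)‖
      ≤ K * √(Fintype.card ι) / m := by
  have hint : IntegrableOn f (univ.pi fun _ => Icc (0 : ℝ) 1) :=
    (continuousOn_of_norm_sub_le_mul_sqrt hf).integrableOn_compact
      (isCompact_univ_pi fun _ => isCompact_Icc)
  have hvol : ∀ i : ι → Fin m, volume.real (cornerCell m i) = ((m : ℝ) ^ Fintype.card ι)⁻¹ :=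
    fun i => by rw [measureReal_def, volume_cornerCell, ENNReal.toReal_ofReal (by positivity)]
  have hcell : ∀ (i : ι → Fin m), ∀ x ∈ cornerCell m i,
      ‖f x - f (fun k => (i k : ℝ) / m)‖ ≤ K * √(Fintype.card ι) / m := fun i x hx => by
    calc ‖f x - f (fun k => (i k : ℝ) / m)‖
        ≤ K * √(∑ k, (x k - (i k : ℝ) / m) ^ 2) :=
          hf x (cornerCell_subset_cube hm i hx) _
            (cornerCell_subset_cube hm i (corner_mem_cornerCell hm i))
      _ ≤ K * (√(Fintype.card ι) * (1 / m)) := by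
          gcongr
          exact sqrt_sum_sq_le_sqrt_card_mul (by positivity)
            (abs_sub_corner_le_of_mem_cornerCell hx)
      _ = K * √(Fintype.card ι) / m := by ring
  have hquad := norm_setIntegral_iUnion_sub_sum_smul_le measurableSet_cornerCell
    (pairwise_disjoint_cornerCell hm) (fun i => by simp [volume_cornerCell])
    (hint.congr_set_ae (iUnion_cornerCell_ae_eq_cube hm)) hcell
  have hpow_ne : (m : ℝ) ^ Fintype.card ι ≠ 0 := by positivity
  simpa [setIntegral_congr_set (iUnion_cornerCell_ae_eq_cube hm), hvol, ← Finset.smul_sum,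
    Fintype.card_fun, hpow_ne] using hquad

/-- There exists a universal constant `c₂ > 0` bounding the
corner-grid discretization error of the complex Fourier integrand for every
bounded Lipschitz function on the unit cube. -/
theorem exists_const_cornerGrid_discretization_error_complex :
    ∃ c₂ : ℝ, 0 < c₂ ∧
      ∀ (d m : ℕ), 0 < d → 0 < m → ∀ (n : ℕ), n = m ^ d →
        ∀ (ω : Fin d → ℝ) (M L : ℝ), 1 ≤ M → 1 ≤ L →
          ∀ v : (Fin d → ℝ) → ℝ,
            (∀ x ∈ Set.univ.pi fun _ : Fin d => Set.Icc (0:ℝ) 1,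
              ∀ y ∈ Set.univ.pi fun _ : Fin d => Set.Icc (0:ℝ) 1,
                |v x - v y| ≤ L * Real.sqrt (∑ k, (x k - y k) ^ 2)) →
            (∀ x ∈ Set.univ.pi fun _ : Fin d => Set.Icc (0:ℝ) 1, |v x| ≤ M) →
            Norm.norm
              ((∫ x in Set.univ.pi fun _ : Fin d => Set.Icc (0:ℝ) 1,
                  (v x : ℂ) *
                    Complex.exp (2 * Real.pi * Complex.I * ((∑ k, ω k * x k : ℝ) : ℂ))) -
                ((m : ℝ) ^ d)⁻¹ * ∑ i : Fin d → Fin m,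
                  (v (fun k => (i k : ℝ) / m) : ℂ) *
                    Complex.exp
                      (2 * Real.pi * Complex.I * ((∑ k, ω k * ((i k : ℝ) / m) : ℝ) : ℂ))) ≤
            c₂ * Real.sqrt d * (Real.sqrt (∑ k, (ω k) ^ 2) + L) * M *
              (n : ℝ) ^ (-(1 : ℝ) / d) := by
  refine ⟨4 * π, by positivity, fun d m hd hm n hn ω M L hM hL v hv hvM => ?_⟩
  set W := √(∑ k, ω k ^ 2)
  have hquad := norm_setIntegral_cube_sub_cornerGrid_le hm
    (by positivity : 0 ≤ L + 2 * π * M * W) fun x hx y hy =>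
      norm_mul_exp_sub_mul_exp_le ω hv hvM hx hy
  have hn_rpow : (n : ℝ) ^ (-(1 : ℝ) / d) = (m : ℝ)⁻¹ := by
    rw [hn, Nat.cast_pow, neg_div, rpow_neg (by positivity), one_div,
      pow_rpow_inv_natCast (Nat.cast_nonneg m) hd.ne']
  have hconst : L + 2 * π * M * W ≤ 4 * π * (W + L) * M := by
    have hW : 0 ≤ W := sqrt_nonneg _
    nlinarith [pi_gt_three, mul_nonneg (mul_nonneg pi_pos.le hW) (sub_nonneg.2 hM),
      mul_nonneg (sub_nonneg.2 hM) (sub_nonneg.2 hL)]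
  rw [Fintype.card_fin, Complex.real_smul] at hquad
  calc _ ≤ (L + 2 * π * M * W) * √d / m := hquad
    _ ≤ 4 * π * (W + L) * M * √d / m := by gcongr
    _ = _ := by rw [hn_rpow]; ring
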